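/- arXiv:1801.05861 — 2 statements merged into one kernel-verified Lean document; each statement's English description precedes it below -/
import Mathlib

section
/- For the convex functional f(λ) = trace(A I(λ)⁻¹), if at some λ there exists an index j with λⱼ > 0 and wⱼ gⱼᵀ I(λ)⁻¹ A I(λ)⁻¹ gⱼ < trace(I(λ)⁻¹A) while all other indices i satisfy wᵢ gᵢᵀ I(λ)⁻¹ A I(λ)⁻¹ gᵢ ≤ trace(I(λ)⁻¹A), then we get the contradiction trace(I(λ)⁻¹A) = Σᵢ λᵢ wᵢ gᵢᵀ I(λ)⁻¹ A I(λ)⁻¹ gᵢ < trace(I(λ)⁻¹A); hence such a configuration is impossible. -/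
open Matrix Finset

lemma trace_mul_vecMulVec {l : ℕ} (M : Matrix (Fin l) (Fin l) ℝ) (v : Fin l → ℝ) :
    (M * vecMulVec v v).trace = v ⬝ᵥ M *ᵥ v := by
  simp only [trace, Matrix.diag_apply, Matrix.mul_apply, vecMulVec_apply, dotProduct, mulVec]
  apply Finset.sum_congr rfl
  intro i _
  rw [Finset.mul_sum]
  apply Finset.sum_congr rfl
  intro j _
  ring

/-- Strict-inequality averaging argument: for a probability weight vector `λ` with `I(λ)`
positive definite, it is impossible that all sensitivities are `≤ trace (I(λ)⁻¹A)` while some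
index with positive weight has a strictly smaller sensitivity. -/
theorem stmt10 (l n : ℕ) (w : Fin n → ℝ) (g : Fin n → (Fin l → ℝ)) (hw : ∀ i, 0 < w i)
    (A : Matrix (Fin l) (Fin l) ℝ) (hA : A.PosSemidef)
    (I : Matrix (Fin l) (Fin l) ℝ)
    (lam : Fin n → ℝ) (hlam : ∀ i, 0 ≤ lam i) (hsum : ∑ i, lam i = 1)
    (hI : I = ∑ i, lam i • w i • vecMulVec (g i) (g i)) (hpd : I.PosDef)
    (hle : ∀ i, w i * (g i ⬝ᵥ (I⁻¹ * A * I⁻¹) *ᵥ g i) ≤ (I⁻¹ * A).trace)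
    (hstrict : ∃ j, 0 < lam j ∧
      w j * (g j ⬝ᵥ (I⁻¹ * A * I⁻¹) *ᵥ g j) < (I⁻¹ * A).trace) :
    False := by
  obtain ⟨j, hj, hjs⟩ := hstrict
  have hInv : IsUnit I.det := isUnit_iff_ne_zero.mpr hpd.det_pos.ne'
  set M := I⁻¹ * A * I⁻¹ with hM
  set T := (I⁻¹ * A).trace with hT
  have key : T = ∑ i, lam i * (w i * (g i ⬝ᵥ M *ᵥ g i)) := by
    have h1 : I⁻¹ * A = M * I := by
      rw [hM, Matrix.mul_assoc, Matrix.mul_assoc, Matrix.nonsing_inv_mul _ hInv,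
        Matrix.mul_one]
    rw [hT, h1]
    conv_lhs => rw [hI]
    rw [Finset.mul_sum, trace_sum]
    apply Finset.sum_congr rfl
    intro i _
    rw [Matrix.mul_smul, Matrix.mul_smul, trace_smul, trace_smul,
      trace_mul_vecMulVec, smul_eq_mul, smul_eq_mul]
  have hlt : ∑ i, lam i * (w i * (g i ⬝ᵥ M *ᵥ g i)) < ∑ i, lam i * T := by
    apply Finset.sum_lt_sum
    · intro i _
      exact mul_le_mul_of_nonneg_left (hle i) (hlam i)
    · exact ⟨j, Finset.mem_univ j, by exact mul_lt_mul_of_pos_left hjs hj⟩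
  rw [← Finset.sum_mul, hsum, one_mul, ← key] at hlt
  exact lt_irrefl T hlt
end

section
/- (General Equivalence Theorem, easy direction) If a design ξ* with positive definite information matrix satisfies w(x) g(x)ᵀ I(ξ*)⁻¹ A I(ξ*)⁻¹ g(x) ≤ trace(I(ξ*)⁻¹A) for all x in the design region Ω, then ξ* minimizes EI(ξ) = trace(A I(ξ)⁻¹) over all designs ξ supported on Ω with positive definite information matrix. -/
/-!
For positive definite `M` and `N`, `(M⁻¹ - N⁻¹) M (M⁻¹ - N⁻¹) ⪰ 0` expands, after multiplying
by `A ⪰ 0` and taking traces, to the tangent-line inequality of the convex map `M ↦ tr (A M⁻¹)`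
at `N`: `tr (A M⁻¹) ≥ 2 tr (A N⁻¹) - tr (N⁻¹ A N⁻¹ M)`. Taking `N = I(ξ*)` and `M = I(ξ')`, the
last trace is the `λ'`-average of `w(x) g(x)ᵀ N⁻¹ A N⁻¹ g(x)`, which the hypothesis bounds by
`tr (N⁻¹ A)`.
-/

open Matrix Finset
open scoped ComplexOrder

namespace Matrix

variable {𝕜 ι : Type*} [RCLike 𝕜] [Fintype ι]

open scoped MatrixOrder in
theorem PosSemidef.trace_mul_nonneg {A B : Matrix ι ι 𝕜} (hA : A.PosSemidef)
    (hB : B.PosSemidef) : 0 ≤ (A * B).trace := by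
  classical
  obtain ⟨C, rfl⟩ := CStarAlgebra.nonneg_iff_eq_star_mul_self.mp hA.nonneg
  rw [star_eq_conjTranspose, Matrix.mul_assoc, trace_mul_comm]
  exact (hB.mul_mul_conjTranspose_same C).trace_nonneg

variable [DecidableEq ι]

theorem PosDef.inv_sub_mul_self_mul_inv_sub {M : Matrix ι ι 𝕜} (hM : M.PosDef)
    (P : Matrix ι ι 𝕜) : (M⁻¹ - P) * M * (M⁻¹ - P) = M⁻¹ - 2 • P + P * M * P := by
  have hdet : IsUnit M.det := (isUnit_iff_isUnit_det M).mp hM.isUnit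
  have hinv_mul : M⁻¹ * M = 1 := nonsing_inv_mul M hdet
  have hmul_inv : M * M⁻¹ = 1 := mul_nonsing_inv M hdet
  rw [Matrix.sub_mul, hinv_mul, Matrix.sub_mul, Matrix.one_mul, Matrix.mul_sub,
    Matrix.mul_assoc P M M⁻¹, hmul_inv, Matrix.mul_one, two_nsmul]
  abel

/-- The tangent-line inequality of the convex map `M ↦ tr (A M⁻¹)` at `P⁻¹`. -/
theorem PosSemidef.two_trace_mul_sub_le_trace_mul_inv {A M P : Matrix ι ι 𝕜}
    (hA : A.PosSemidef) (hM : M.PosDef) (hP : P.IsHermitian) :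
    2 * (A * P).trace - (P * A * P * M).trace ≤ (A * M⁻¹).trace := by
  have hsq : ((M⁻¹ - P)ᴴ * M * (M⁻¹ - P)).PosSemidef :=
    hM.posSemidef.conjTranspose_mul_mul_same _
  rw [conjTranspose_sub, hM.inv.isHermitian.eq, hP.eq,
    hM.inv_sub_mul_self_mul_inv_sub] at hsq
  have key := hA.trace_mul_nonneg hsq
  rw [Matrix.mul_add, Matrix.mul_sub, Matrix.mul_smul, trace_add, trace_sub, trace_smul,
    ← Matrix.mul_assoc, ← Matrix.mul_assoc, trace_mul_cycle] at key
  rw [← sub_nonneg]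
  convert key using 1
  simp only [nsmul_eq_mul, Nat.cast_ofNat, Matrix.mul_assoc]
  ring

end Matrix

section Design

variable {Ω ι κ : Type*} [Fintype ι] [Fintype κ]

def informationMatrix (w : Ω → ℝ) (g : Ω → κ → ℝ) (x : ι → Ω) (lam : ι → ℝ) :
    Matrix κ κ ℝ :=
  ∑ i, lam i • w (x i) • vecMulVec (g (x i)) (g (x i))

theorem trace_mul_informationMatrix (w : Ω → ℝ) (g : Ω → κ → ℝ) (x : ι → Ω) (lam : ι → ℝ)
    (X : Matrix κ κ ℝ) :
    (X * informationMatrix w g x lam).trace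
      = ∑ i, lam i * (w (x i) * (g (x i) ⬝ᵥ X *ᵥ g (x i))) := by
  simp only [informationMatrix, Matrix.mul_sum, Matrix.mul_smul, trace_sum, trace_smul,
    mul_vecMulVec, trace_vecMulVec, dotProduct_comm _ (g _), smul_eq_mul]

theorem trace_mul_informationMatrix_le {w : Ω → ℝ} {g : Ω → κ → ℝ} {X : Matrix κ κ ℝ} {c : ℝ}
    (hX : ∀ y, w y * (g y ⬝ᵥ X *ᵥ g y) ≤ c) (x : ι → Ω) {lam : ι → ℝ}
    (hlam : ∀ i, 0 ≤ lam i) (hsum : ∑ i, lam i = 1) :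
    (X * informationMatrix w g x lam).trace ≤ c :=
  calc (X * informationMatrix w g x lam).trace
      = ∑ i, lam i * (w (x i) * (g (x i) ⬝ᵥ X *ᵥ g (x i))) :=
        trace_mul_informationMatrix w g x lam X
    _ ≤ ∑ i, lam i * c := by gcongr with i; exacts [hlam i, hX (x i)]
    _ = c := by rw [← Finset.sum_mul, hsum, one_mul]

end Design

theorem stmt14_general (l : ℕ) (Ω : Type*) (w : Ω → ℝ) (g : Ω → (Fin l → ℝ))
    (A : Matrix (Fin l) (Fin l) ℝ) (hA : A.PosSemidef)
    (Is : Matrix (Fin l) (Fin l) ℝ)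
    (hpds : Is.PosDef)
    (hGET : ∀ x : Ω, w x * (g x ⬝ᵥ (Is⁻¹ * A * Is⁻¹) *ᵥ g x) ≤ (Is⁻¹ * A).trace) :
    ∀ (m : ℕ) (x' : Fin m → Ω) (lam' : Fin m → ℝ),
      (∀ i, 0 ≤ lam' i) → ∑ i, lam' i = 1 →
      ∀ I' : Matrix (Fin l) (Fin l) ℝ,
        I' = ∑ i, lam' i • w (x' i) • vecMulVec (g (x' i)) (g (x' i)) →
        I'.PosDef →
        (A * Is⁻¹).trace ≤ (A * I'⁻¹).trace := by
  intro m x' lam' hlam' hsum' I' hI' hpd'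
  have tangent := hA.two_trace_mul_sub_le_trace_mul_inv hpd' hpds.inv.isHermitian
  have bound : (Is⁻¹ * A * Is⁻¹ * I').trace ≤ (A * Is⁻¹).trace := by
    rw [trace_mul_comm A, hI']
    exact trace_mul_informationMatrix_le hGET x' hlam' hsum'
  linarith

/-- General Equivalence Theorem (easy direction). If the design `ξ*` (with support points
`x* : Fin n → Ω`, weights `λ*` and positive definite information matrix `I*`) satisfies
`w(x) g(x)ᵀ I*⁻¹ A I*⁻¹ g(x) ≤ trace (I*⁻¹A)` for all `x ∈ Ω`, then `ξ*` minimizes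
`EI(ξ) = trace (A * I(ξ)⁻¹)` over all finitely supported designs on `Ω` with positive
definite information matrix. -/
theorem stmt14 (l : ℕ) (Ω : Type*) (w : Ω → ℝ) (g : Ω → (Fin l → ℝ)) (hw : ∀ x, 0 < w x)
    (A : Matrix (Fin l) (Fin l) ℝ) (hA : A.PosSemidef)
    (n : ℕ) (xs : Fin n → Ω) (lams : Fin n → ℝ)
    (hlams : ∀ i, 0 ≤ lams i) (hsums : ∑ i, lams i = 1)
    (Is : Matrix (Fin l) (Fin l) ℝ)
    (hIs : Is = ∑ i, lams i • w (xs i) • vecMulVec (g (xs i)) (g (xs i)))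
    (hpds : Is.PosDef)
    (hGET : ∀ x : Ω, w x * (g x ⬝ᵥ (Is⁻¹ * A * Is⁻¹) *ᵥ g x) ≤ (Is⁻¹ * A).trace) :
    ∀ (m : ℕ) (x' : Fin m → Ω) (lam' : Fin m → ℝ),
      (∀ i, 0 ≤ lam' i) → ∑ i, lam' i = 1 →
      ∀ I' : Matrix (Fin l) (Fin l) ℝ,
        I' = ∑ i, lam' i • w (x' i) • vecMulVec (g (x' i)) (g (x' i)) →
        I'.PosDef →
        (A * Is⁻¹).trace ≤ (A * I'⁻¹).trace :=
  stmt14_general l Ω w g A hA Is hpds hGET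
end
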